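/- Conjunctive Monotonicity Lemma, part (i): Let U_1 and U_2 be two TA templates with conjunctive guards, let Φ(1_2) be an IMTL formula over the first instance of U_2, and let Q ∈ {E, E_inf, E_fin}. Then for any n ∈ ℕ with n ≥ 1: if (U_1,U_2)^{(1,n)} ⊨ Q Φ(1_2) then (U_1,U_2)^{(1,n+1)} ⊨ Q Φ(1_2). -/

import Mathlib

open scoped ENNReal NNReal

namespace PNTA

/-! ### Basic ingredients: comparisons and clock constraints -/

/-- Comparison operators `<, ≤, >, ≥, =`. -/
inductive Cmp : Type
  | lt | le | gt | ge | eq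

/-- Evaluation of a comparison operator on nonnegative reals. -/
def Cmp.eval : Cmp → NNReal → NNReal → Prop
  | .lt, a, b => a < b
  | .le, a, b => a ≤ b
  | .gt, a, b => b < a
  | .ge, a, b => b ≤ a
  | .eq, a, b => a = b

/-- Clock constraints `TC(C)`: Boolean combinations of comparisons of clocks with
clocks or with nonnegative rational constants. -/
inductive ClockConstraint (C : Type) : Type
  | tt
  | neg (g : ClockConstraint C)
  | disj (g₁ g₂ : ClockConstraint C)
  | cmpClock (op : Cmp) (c₁ c₂ : C)
  | cmpConst (op : Cmp) (c : C) (q : ℚ≥0)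

/-- Satisfaction of a clock constraint by a clock valuation. -/
def ClockConstraint.sat {C : Type} (u : C → NNReal) : ClockConstraint C → Prop
  | .tt => True
  | .neg g => ¬ g.sat u
  | .disj g₁ g₂ => g₁.sat u ∨ g₂.sat u
  | .cmpClock op c₁ c₂ => op.eval (u c₁) (u c₂)
  | .cmpConst op c q => op.eval (u c) (q : NNReal)

/-! ### Parameterized networks of timed automata with conjunctive guards -/

/-- A parameterized network of `k` timed automaton templates
`U_l = ⟨S_l, ŝ_l, C_l, Γ_l, τ_l, I_l⟩` with **conjunctive guards**.
A conjunctive guard assigns to every template `h` a set of states of `U_h`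
(the disjunction `ŝ_h ∨ s_h¹ ∨ ⋯`), which must contain the initial state `ŝ_h`;
it is satisfied by a global state when every *other* instance of every template `h`
is in a state belonging to the corresponding set. -/
structure ConjPNTA (k : ℕ) : Type 1 where
  /-- states of each template -/
  State : Fin k → Type
  stateFintype : ∀ l, Fintype (State l)
  /-- initial state of each template -/
  init : ∀ l, State l
  /-- clock variables of each template -/
  Clock : Fin k → Type
  clockFintype : ∀ l, Fintype (Clock l)
  /-- transitions `s —(g,r,γ)→ t`: source, clock constraint, reset set, conjunctive guard, target -/
  trans : ∀ l, Set (State l × ClockConstraint (Clock l) × Set (Clock l) ×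
      ((h : Fin k) → Set (State h)) × State l)
  trans_finite : ∀ l, (trans l).Finite
  /-- guards are conjunctive: every disjunct contains the initial state -/
  guards_conj : ∀ l tr, tr ∈ trans l → ∀ h, init h ∈ tr.2.2.2.1 h
  /-- state invariants -/
  inv : ∀ l, State l → ClockConstraint (Clock l)
  inv_init : ∀ l, inv l (init l) = ClockConstraint.tt

variable {k : ℕ}

/-- `|U_l|`: the number of states of template `l`. -/
def ConjPNTA.size (A : ConjPNTA k) (l : Fin k) : ℕ :=
  @Fintype.card (A.State l) (A.stateFintype l)

lemma ConjPNTA.size_pos (A : ConjPNTA k) (l : Fin k) : 0 < A.size l :=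
  @Fintype.card_pos _ (A.stateFintype l) ⟨A.init l⟩

/-- A configuration of the PNTA `(U_1,…,U_k)^{(n_1,…,n_k)}`: each instance `U_l^i`
(`l < k`, `i < n_l`) has a current state and a clock valuation satisfying the
invariant of that state. -/
structure Config (A : ConjPNTA k) (n : Fin k → ℕ) : Type where
  st : ∀ l, Fin (n l) → A.State l
  cl : ∀ l, Fin (n l) → A.Clock l → NNReal
  inv_sat : ∀ l i, (A.inv l (st l i)).sat (cl l i)

/-- The initial configuration: every instance in its initial state, all clocks `0`. -/
def initConfig (A : ConjPNTA k) (n : Fin k → ℕ) : Config A n where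
  st := fun l _ => A.init l
  cl := fun _ _ _ => 0
  inv_sat := fun l _ => by rw [A.inv_init l]; exact trivial

/-- The global state of configuration `c` satisfies the conjunctive guard `γ`
from the point of view of instance `(l, i)`: every other instance is in one of
the allowed states. -/
def guardSat {A : ConjPNTA k} {n : Fin k → ℕ} (c : Config A n) (l : Fin k) (i : Fin (n l))
    (γ : (h : Fin k) → Set (A.State h)) : Prop :=
  ∀ p : Σ h, Fin (n h), p ≠ ⟨l, i⟩ → c.st p.1 p.2 ∈ γ p.1

/-- Delay transition `c →d c'`: all clocks of all instances advance by `d`,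
states are unchanged, and all invariants hold throughout the delay. -/
def DelayStep {A : ConjPNTA k} {n : Fin k → ℕ} (d : NNReal) (c c' : Config A n) : Prop :=
  c'.st = c.st ∧
  (∀ l i x, c'.cl l i x = c.cl l i x + d) ∧
  (∀ l i (d' : NNReal), d' ≤ d → (A.inv l (c.st l i)).sat fun x => c.cl l i x + d')

/-- Synchronization transition `c →γ c'`: exactly one instance `U_l^i` fires a
transition `s —(g,r,γ)→ t` of `τ_l`; its current state is `s`, its clocks satisfy `g`,
the global state satisfies the conjunctive guard `γ`, its clocks in `r` are reset to 0,
and all other instances are unchanged. -/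
def SyncStep {A : ConjPNTA k} {n : Fin k → ℕ} (c c' : Config A n) : Prop :=
  ∃ (l : Fin k) (i : Fin (n l)), ∃ tr ∈ A.trans l,
    tr.1 = c.st l i ∧
    tr.2.1.sat (c.cl l i) ∧
    guardSat c l i tr.2.2.2.1 ∧
    c'.st l i = tr.2.2.2.2 ∧
    (∀ x, (x ∈ tr.2.2.1 → c'.cl l i x = 0) ∧ (x ∉ tr.2.2.1 → c'.cl l i x = c.cl l i x)) ∧
    (∀ p : Σ h, Fin (n h), p ≠ ⟨l, i⟩ → c'.st p.1 p.2 = c.st p.1 p.2 ∧ c'.cl p.1 p.2 = c.cl p.1 p.2)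

/-- A step of a timed computation: a delay transition with positive delay
(time advances accordingly) or a synchronization transition (time unchanged). -/
def Step {A : ConjPNTA k} {n : Fin k → ℕ} (c c' : Config A n) (t t' : NNReal) : Prop :=
  (∃ d : NNReal, 0 < d ∧ DelayStep d c c' ∧ t' = t + d) ∨ (SyncStep c c' ∧ t' = t)

/-- A timed computation starting at configuration `c₀` at time `0`: a finite or
infinite sequence of configuration/time pairs (represented as a partial function
on positions with downward closed domain) whose consecutive elements are related
by delay or synchronization transitions. -/
structure TimedComp (A : ConjPNTA k) (n : Fin k → ℕ) (c₀ : Config A n) : Type where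
  seq : ℕ → Option (Config A n × NNReal)
  zero_def : seq 0 = some (c₀, 0)
  downward : ∀ v, (seq (v + 1)).isSome → (seq v).isSome
  step : ∀ v c t c' t', seq v = some (c, t) → seq (v + 1) = some (c', t') → Step c c' t t'

namespace TimedComp

variable {A : ConjPNTA k} {n : Fin k → ℕ} {c₀ : Config A n}

/-- An infinite timed computation. -/
def Infinite (x : TimedComp A n c₀) : Prop := ∀ v, (x.seq v).isSome

/-- A (not necessarily maximal) finite timed computation. -/
def Finite (x : TimedComp A n c₀) : Prop := ∃ v, x.seq v = none

/-- A deadlocked timed computation: maximal finite, i.e. all transitions are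
disabled at its final configuration. -/
def Deadlocked (x : TimedComp A n c₀) : Prop :=
  ∃ v c t, x.seq v = some (c, t) ∧ x.seq (v + 1) = none ∧
    ∀ c' : Config A n, ¬ ((∃ d : NNReal, 0 < d ∧ DelayStep d c c') ∨ SyncStep c c')

/-- The time stamp at position `v` (junk value `0` outside the domain). -/
def timeAt (x : TimedComp A n c₀) (v : ℕ) : NNReal := ((x.seq v).map Prod.snd).getD 0

end TimedComp

/-! ### s-paths (continuous-time signals induced by timed computations) -/

/-- An s-path: a continuous-time signal of configurations, together with its
(possibly infinite) length. -/
structure SPath (A : ConjPNTA k) (n : Fin k → ℕ) : Type where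
  len : ℝ≥0∞
  toFun : NNReal → Config A n

/-- The suffix `ρ⌊t` of an s-path. -/
noncomputable def SPath.suffix {A : ConjPNTA k} {n : Fin k → ℕ} (ρ : SPath A n) (t : NNReal) : SPath A n where
  len := ρ.len - (t : ℝ≥0∞)
  toFun := fun s => ρ.toFun (t + s)

/-- The timed computation `x` induces the s-path `ρ`: for every step of `x` from
`(c_v,t_v)` to `(c_{v+1},t_{v+1})` and every time `s ∈ [t_v, t_{v+1})`, `ρ(s)` has
the states of `c_v` with clocks advanced by `s - t_v`; the length of `ρ` is the
supremum of the time stamps (for an infinite computation), resp. the final time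
stamp (for a finite one, at which the final configuration persists). -/
def Induces {A : ConjPNTA k} {n : Fin k → ℕ} {c₀ : Config A n}
    (x : TimedComp A n c₀) (ρ : SPath A n) : Prop :=
  (∀ v c t c' t', x.seq v = some (c, t) → x.seq (v + 1) = some (c', t') →
    ∀ s : NNReal, t ≤ s → s < t' →
      (ρ.toFun s).st = c.st ∧ ∀ l i cx, (ρ.toFun s).cl l i cx = c.cl l i cx + (s - t)) ∧
  (x.Infinite → ρ.len = ⨆ v, (x.timeAt v : ℝ≥0∞)) ∧
  (∀ v c t, x.seq v = some (c, t) → x.seq (v + 1) = none →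
    ρ.len = (t : ℝ≥0∞) ∧ (ρ.toFun t).st = c.st ∧ ∀ l i cx, (ρ.toFun t).cl l i cx = c.cl l i cx)

/-- `tcomp(ρ)`: the set of timed computations (from `c₀`) inducing the s-path `ρ`. -/
def tcomp {A : ConjPNTA k} {n : Fin k → ℕ} (c₀ : Config A n) (ρ : SPath A n) :
    Set (TimedComp A n c₀) :=
  {x | Induces x ρ}

/-- `|ρ| = ω` : `ρ` is (induced by) an infinite timed computation from `c₀`. -/
def SPath.IsInfiniteFrom {A : ConjPNTA k} {n : Fin k → ℕ} (c₀ : Config A n) (ρ : SPath A n) : Prop :=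
  ∃ x : TimedComp A n c₀, Induces x ρ ∧ x.Infinite

/-- `|ρ| < ω` : `ρ` is induced by a finite timed computation from `c₀`. -/
def SPath.IsFiniteFrom {A : ConjPNTA k} {n : Fin k → ℕ} (c₀ : Config A n) (ρ : SPath A n) : Prop :=
  ∃ x : TimedComp A n c₀, Induces x ρ ∧ x.Finite

/-- `deadlock(ρ)` : `ρ` is induced by a deadlocked timed computation from `c₀`. -/
def SPath.IsDeadlockedFrom {A : ConjPNTA k} {n : Fin k → ℕ} (c₀ : Config A n) (ρ : SPath A n) : Prop :=
  ∃ x : TimedComp A n c₀, Induces x ρ ∧ x.Deadlocked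

/-! ### IMTL formulae and their continuous-time semantics -/

/-- IMTL path formulae over atomic propositions `α`: built from `⊤` and atoms by
Boolean operators (`∧`, `¬`) and time-constrained until `Φ U_{∼q} Ψ` with
`∼ ∈ {<,≤,>,≥,=}` and `q ∈ ℚ≥0`. -/
inductive IMTL (α : Type) : Type
  | tt
  | atom (a : α)
  | and (φ ψ : IMTL α)
  | not (φ : IMTL α)
  | untl (op : Cmp) (q : ℚ≥0) (φ ψ : IMTL α)

/-- Satisfaction of an IMTL path formula on an s-path, given a valuation of the
atomic propositions on configurations. -/
def satIMTL {A : ConjPNTA k} {n : Fin k → ℕ} {α : Type} (val : α → Config A n → Prop) :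
    IMTL α → SPath A n → Prop
  | .tt, _ => True
  | .atom a, ρ => val a (ρ.toFun 0)
  | .and φ ψ, ρ => satIMTL val φ ρ ∧ satIMTL val ψ ρ
  | .not φ, ρ => ¬ satIMTL val φ ρ
  | .untl op q φ ψ, ρ => ∃ t' : NNReal, (t' : ℝ≥0∞) ≤ ρ.len ∧ op.eval t' (q : NNReal) ∧
      satIMTL val ψ (ρ.suffix t') ∧ ∀ t : NNReal, t < t' → satIMTL val φ (ρ.suffix t)

/-- The six path quantifiers `A, A_inf, A_fin, E, E_inf, E_fin`. -/
inductive PathQ : Type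
  | A | Ainf | Afin | E | Einf | Efin

/-- `(U_1,…,U_k)^{(n_1,…,n_k)} ⊨ Q Φ` for a path quantifier `Q`: quantification over
the s-paths from the initial configuration that are infinite or deadlocked (`A`, `E`),
infinite (`A_inf`, `E_inf`), resp. finite (`A_fin`, `E_fin`). -/
def SatQ (A : ConjPNTA k) (n : Fin k → ℕ) {α : Type} (val : α → Config A n → Prop)
    (Q : PathQ) (Φ : IMTL α) : Prop :=
  match Q with
  | .A => ∀ ρ : SPath A n,
      (ρ.IsInfiniteFrom (initConfig A n) ∨ ρ.IsDeadlockedFrom (initConfig A n)) → satIMTL val Φ ρ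
  | .Ainf => ∀ ρ : SPath A n, ρ.IsInfiniteFrom (initConfig A n) → satIMTL val Φ ρ
  | .Afin => ∀ ρ : SPath A n, ρ.IsFiniteFrom (initConfig A n) → satIMTL val Φ ρ
  | .E => ∃ ρ : SPath A n,
      (ρ.IsInfiniteFrom (initConfig A n) ∨ ρ.IsDeadlockedFrom (initConfig A n)) ∧ satIMTL val Φ ρ
  | .Einf => ∃ ρ : SPath A n, ρ.IsInfiniteFrom (initConfig A n) ∧ satIMTL val Φ ρ
  | .Efin => ∃ ρ : SPath A n, ρ.IsFiniteFrom (initConfig A n) ∧ satIMTL val Φ ρ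

/-- Atomic propositions of the indexed formula `Φ(i_{l₁},…,i_{l_h})`: a quantified
slot `j < h` together with a state (= atomic proposition) of template `l_j`. -/
def Atoms (A : ConjPNTA k) {h : ℕ} (l : Fin h → Fin k) : Type :=
  Σ j : Fin h, A.State (l j)

/-- The valuation of the atoms, given an assignment `inst` of concrete instances to
the quantified slots: `p(l_j, i_{l_j})` holds iff instance `i_{l_j}` of template `l_j`
is in state `p`. -/
def atomVal (A : ConjPNTA k) (n : Fin k → ℕ) {h : ℕ} (l : Fin h → Fin k)
    (inst : ∀ j : Fin h, Fin (n (l j))) : Atoms A l → Config A n → Prop :=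
  fun a c => c.st (l a.1) (inst a.1) = a.2

/-- `(U_1,…,U_k)^{(n_1,…,n_k)} ⊨ ⋀_{i_{l₁},…,i_{l_h}} Q Φ(i_{l₁},…,i_{l_h})`. -/
def SatFormula (A : ConjPNTA k) (n : Fin k → ℕ) {h : ℕ} (l : Fin h → Fin k)
    (Q : PathQ) (Φ : IMTL (Atoms A l)) : Prop :=
  ∀ inst : ∀ j : Fin h, Fin (n (l j)), SatQ A n (atomVal A n l inst) Q Φ

/-! ### Helpers for networks of two templates -/

/-- The size function of the system `(U₁,U₂)^{(a,b)}`. -/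
def two (a b : ℕ) : Fin 2 → ℕ := fun m => if m.val = 0 then a else b

/-- The valuation interpreting the atoms of a formula `Φ(1_t)` over the *first*
instance of template `t`. -/
def valFirst (A : ConjPNTA 2) (n : Fin 2 → ℕ) (t : Fin 2) (hp : 0 < n t) :
    A.State t → Config A n → Prop :=
  fun p c => c.st t ⟨0, hp⟩ = p


/-! ### Cutoffs for two-template systems -/

/-- Cutoff for the template tracked by the formula `Φ(1₂)` (part (i)):
`2` for `E_inf`, `1` for `E_fin`, `2|U₂| + 1` for `E`. -/
def cutoffTracked (A : ConjPNTA 2) : PathQ → ℕ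
  | PathQ.Einf => 2
  | PathQ.Efin => 1
  | PathQ.E => 2 * A.size 1 + 1
  | _ => 1

/-- Cutoff for the untracked template (part (ii)):
`1` for `E_inf`, `1` for `E_fin`, `2|U₂|` for `E`. -/
def cutoffOther (A : ConjPNTA 2) : PathQ → ℕ
  | PathQ.Einf => 1
  | PathQ.Efin => 1
  | PathQ.E => 2 * A.size 1
  | _ => 1

lemma cutoffTracked_pos (A : ConjPNTA 2) (Q : PathQ) : 0 < cutoffTracked A Q := by
  have := A.size_pos 1
  cases Q <;> simp only [cutoffTracked] <;> omega

lemma cutoffOther_pos (A : ConjPNTA 2) (Q : PathQ) : 0 < cutoffOther A Q := by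
  have := A.size_pos 1
  cases Q <;> simp only [cutoffOther] <;> omega

/-! ### Stuttering, reindexings and local computations -/

/-- `y` is a *stuttering* of `x`: it is obtained from `x` by inserting, between
consecutive elements, finitely many intermediate observations of the same states
with clocks advanced by small delays `δ`, without altering the original elements.
The map `m` sends a position of `y` to the position of `x` it refines. -/
def Stuttering {A : ConjPNTA k} {n : Fin k → ℕ} {c₀ : Config A n}
    (y x : TimedComp A n c₀) : Prop :=
  ∃ m : ℕ → ℕ, Monotone m ∧ m 0 = 0 ∧
    (∀ w, (y.seq w).isSome → (x.seq (m w)).isSome) ∧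
    (∀ w, y.seq w = none → ∃ v, x.seq v = none) ∧
    (∀ v, Set.Finite {w | (y.seq w).isSome ∧ m w = v}) ∧
    (∀ v, (x.seq v).isSome → ∃ w, m w = v ∧ y.seq w = x.seq v) ∧
    (∀ w cy ty cx tx, y.seq w = some (cy, ty) → x.seq (m w) = some (cx, tx) →
      tx ≤ ty ∧ cy.st = cx.st ∧ (∀ l i cxk, cy.cl l i cxk = cx.cl l i cxk + (ty - tx)) ∧
      ∀ cx' tx', x.seq (m w + 1) = some (cx', tx') → ty ≤ tx')

/-- A reindexing of positions between a timed computation `x` and a timed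
computation `y` obtained from `x` by collapsing some steps. -/
def Reindex {A : ConjPNTA k} {n n' : Fin k → ℕ} {c₀ : Config A n} {c₀' : Config A n'}
    (x : TimedComp A n c₀) (y : TimedComp A n' c₀') (m : ℕ → ℕ) : Prop :=
  Monotone m ∧ m 0 = 0 ∧
    (∀ v, (x.seq v).isSome → (y.seq (m v)).isSome) ∧
    (∀ w, (y.seq w).isSome → ∃ v, (x.seq v).isSome ∧ m v = w)

/-- The local timed computation of instance `(l, iy)` of `y` coincides (through the
reindexing `m`) with the local timed computation of instance `(l, ix)` of `x`:
same times, same states, same clock values. -/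
def LocalMatch {A : ConjPNTA k} {n n' : Fin k → ℕ} {c₀ : Config A n} {c₀' : Config A n'}
    (x : TimedComp A n c₀) (y : TimedComp A n' c₀') (m : ℕ → ℕ)
    (l : Fin k) (ix : Fin (n l)) (iy : Fin (n' l)) : Prop :=
  ∀ v c t c' t', x.seq v = some (c, t) → y.seq (m v) = some (c', t') →
    t' = t ∧ c'.st l iy = c.st l ix ∧ c'.cl l iy = c.cl l ix

/-- Instance `(l, i)` of `y` follows the idle local computation: it stutters in the
initial state `ŝ_l` with all its clocks equal to the elapsed time. -/
def IdleLocal {A : ConjPNTA k} {n : Fin k → ℕ} {c₀ : Config A n}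
    (y : TimedComp A n c₀) (l : Fin k) (i : Fin (n l)) : Prop :=
  ∀ v c t, y.seq v = some (c, t) → c.st l i = A.init l ∧ ∀ cx, c.cl l i cx = t

/-- The local computation of instance `(l, i)` of `x` is infinite: the instance takes
infinitely many (observable) synchronization steps. -/
def LocalInfinite {A : ConjPNTA k} {n : Fin k → ℕ} {c₀ : Config A n}
    (x : TimedComp A n c₀) (l : Fin k) (i : Fin (n l)) : Prop :=
  ∀ N, ∃ v, N ≤ v ∧ ∃ c t c' t', x.seq v = some (c, t) ∧ x.seq (v + 1) = some (c', t') ∧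
    t' = t ∧ ¬ (c'.st l i = c.st l i ∧ c'.cl l i = c.cl l i)

lemma two_le_two_succ (n : ℕ) (l : Fin 2) : two 1 n l ≤ two 1 (n + 1) l := by
  unfold two; split <;> omega

lemma c2two (A : ConjPNTA 2) {c₂ : ℕ} (hc : c₂ = 2 ∨ c₂ = 2 * A.size 1 + 1) : 1 < c₂ := by
  have := A.size_pos 1
  rcases hc with h | h <;> omega

lemma c2pos (A : ConjPNTA 2) {c₂ : ℕ} (hc : c₂ = 2 ∨ c₂ = 2 * A.size 1 + 1) : 0 < c₂ :=
  Nat.lt_of_lt_of_le Nat.one_pos (Nat.le_of_lt (c2two A hc))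

lemma npos (A : ConjPNTA 2) {c₂ n : ℕ} (hc : c₂ = 2 ∨ c₂ = 2 * A.size 1 + 1) (hn : c₂ ≤ n) :
    0 < n := Nat.lt_of_lt_of_le (c2pos A hc) hn

/-! ### Auxiliary development for the monotonicity proof -/

section Aux

open Classical

lemma Config.ext' {A : ConjPNTA k} {n : Fin k → ℕ} {c c' : Config A n}
    (h1 : c.st = c'.st) (h2 : c.cl = c'.cl) : c = c' := by
  cases c; cases c'; cases h1; cases h2; rfl

lemma sig_eq_iff {m : Fin 2 → ℕ} {l l' : Fin 2} {i : Fin (m l)} {i' : Fin (m l')} :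
    (⟨l, i⟩ : Σ h, Fin (m h)) = ⟨l', i'⟩ ↔ l = l' ∧ (i : ℕ) = (i' : ℕ) := by
  constructor
  · intro h
    obtain ⟨h1, h2⟩ := Sigma.mk.inj_iff.mp h
    subst h1
    exact ⟨rfl, congrArg Fin.val (eq_of_heq h2)⟩
  · rintro ⟨rfl, h⟩
    exact congrArg _ (Fin.ext h)

variable {A : ConjPNTA 2} {n : ℕ}

/-- Either an instance index of the `(1, n+1)` system comes from the `(1, n)` system,
or it is the new instance (template `1`, index `n`). -/
lemma old_or_new (l : Fin 2) (i : Fin (two 1 (n + 1) l)) :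
    (i : ℕ) < two 1 n l ∨ (l = 1 ∧ (i : ℕ) = n) := by
  have hi := i.isLt
  fin_cases l <;> simp only [two] at * <;> simp_all <;> omega

/-- Extend a configuration of the `(1,n)` system to the `(1,n+1)` system: the new
instance is in the initial state with all clocks equal to `t`. -/
noncomputable def extConfig (A : ConjPNTA 2) {n : ℕ} (c : Config A (two 1 n)) (t : NNReal) :
    Config A (two 1 (n + 1)) where
  st := fun l i => if h : (i : ℕ) < two 1 n l then c.st l ⟨i, h⟩ else A.init l
  cl := fun l i x => if h : (i : ℕ) < two 1 n l then c.cl l ⟨i, h⟩ x else t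
  inv_sat := fun l i => by
    by_cases h : (i : ℕ) < two 1 n l
    · simp only [dif_pos h]
      exact c.inv_sat l ⟨i, h⟩
    · simp only [dif_neg h, A.inv_init]
      trivial

@[simp] lemma extConfig_st_old (c : Config A (two 1 n)) (t : NNReal) (l : Fin 2)
    (i : Fin (two 1 n l)) :
    (extConfig A c t).st l (Fin.castLE (two_le_two_succ n l) i) = c.st l i := by
  simp only [extConfig, Fin.castLE]
  rw [dif_pos i.isLt]

@[simp] lemma extConfig_cl_old (c : Config A (two 1 n)) (t : NNReal) (l : Fin 2)
    (i : Fin (two 1 n l)) :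
    (extConfig A c t).cl l (Fin.castLE (two_le_two_succ n l) i) = c.cl l i := by
  funext x
  simp only [extConfig, Fin.castLE]
  rw [dif_pos i.isLt]

lemma extConfig_st_new (c : Config A (two 1 n)) (t : NNReal) (l : Fin 2)
    (i : Fin (two 1 (n + 1) l)) (h : ¬ (i : ℕ) < two 1 n l) :
    (extConfig A c t).st l i = A.init l := by
  simp only [extConfig]; rw [dif_neg h]

lemma extConfig_cl_new (c : Config A (two 1 n)) (t : NNReal) (l : Fin 2)
    (i : Fin (two 1 (n + 1) l)) (h : ¬ (i : ℕ) < two 1 n l) (x : A.Clock l) :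
    (extConfig A c t).cl l i x = t := by
  simp only [extConfig]; rw [dif_neg h]

/-- Restrict a configuration of the `(1,n+1)` system to the `(1,n)` system. -/
def projConfig (c : Config A (two 1 (n + 1))) : Config A (two 1 n) where
  st := fun l i => c.st l (Fin.castLE (two_le_two_succ n l) i)
  cl := fun l i => c.cl l (Fin.castLE (two_le_two_succ n l) i)
  inv_sat := fun l i => c.inv_sat l _

lemma proj_ext (c : Config A (two 1 n)) (t : NNReal) :
    projConfig (extConfig A c t) = c := by
  refine Config.ext' ?_ ?_ <;> funext l i <;> simp [projConfig]

/-- Delay steps lift along `extConfig`. -/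
lemma delay_ext {d t : NNReal} {c c' : Config A (two 1 n)} (h : DelayStep d c c') :
    DelayStep d (extConfig A c t) (extConfig A c' (t + d)) := by
  obtain ⟨hst, hcl, hinv⟩ := h
  refine ⟨?_, ?_, ?_⟩
  · funext l i
    by_cases hi : (i : ℕ) < two 1 n l
    · simp only [extConfig, dif_pos hi]
      exact congrFun (congrFun hst l) ⟨i, hi⟩
    · simp only [extConfig, dif_neg hi]
  · intro l i x
    by_cases hi : (i : ℕ) < two 1 n l
    · simp only [extConfig, dif_pos hi]
      exact hcl l ⟨i, hi⟩ x
    · simp only [extConfig, dif_neg hi]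
  · intro l i d' hd'
    by_cases hi : (i : ℕ) < two 1 n l
    · simp only [extConfig, dif_pos hi]
      exact hinv l ⟨i, hi⟩ d' hd'
    · simp only [extConfig, dif_neg hi, A.inv_init]
      trivial

/-- Synchronization steps lift along `extConfig`: conjunctive guards always allow
the new instance, which stays in the initial state. -/
lemma sync_ext {t : NNReal} {c c' : Config A (two 1 n)} (h : SyncStep c c') :
    SyncStep (extConfig A c t) (extConfig A c' t) := by
  obtain ⟨l, i, tr, htr, hsrc, hg, hγ, htgt, hreset, hoth⟩ := h
  refine ⟨l, Fin.castLE (two_le_two_succ n l) i, tr, htr, ?_, ?_, ?_, ?_, ?_, ?_⟩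
  · rw [extConfig_st_old]; exact hsrc
  · rw [extConfig_cl_old]; exact hg
  · rintro ⟨h', j⟩ hne
    rcases old_or_new h' j with hj | ⟨hl, hval⟩
    · have : (⟨h', ⟨j, hj⟩⟩ : Σ h, Fin (two 1 n h)) ≠ ⟨l, i⟩ := by
        intro hc
        apply hne
        rw [sig_eq_iff] at hc ⊢
        exact hc
      have := hγ ⟨h', ⟨j, hj⟩⟩ this
      simpa [extConfig, dif_pos hj] using this
    · have : ¬ (j : ℕ) < two 1 n h' := by
        subst hl
        rw [show two 1 n 1 = n from rfl]
        omega
      rw [extConfig_st_new c t h' j this]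
      exact A.guards_conj l tr htr h'
  · rw [extConfig_st_old]; exact htgt
  · intro x
    rw [extConfig_cl_old, extConfig_cl_old]
    exact hreset x
  · rintro ⟨h', j⟩ hne
    rcases old_or_new h' j with hj | ⟨hl, hval⟩
    · have : (⟨h', ⟨j, hj⟩⟩ : Σ h, Fin (two 1 n h)) ≠ ⟨l, i⟩ := by
        intro hc
        apply hne
        rw [sig_eq_iff] at hc ⊢
        exact hc
      have := hoth ⟨h', ⟨j, hj⟩⟩ this
      constructor
      · simpa [extConfig, dif_pos hj] using this.1
      · funext x
        simpa [extConfig, dif_pos hj] using congrFun this.2 x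
    · have hj : ¬ (j : ℕ) < two 1 n h' := by
        subst hl
        rw [show two 1 n 1 = n from rfl]
        omega
      constructor
      · rw [extConfig_st_new c t h' j hj, extConfig_st_new c' t h' j hj]
      · funext x
        rw [extConfig_cl_new c t h' j hj, extConfig_cl_new c' t h' j hj]

/-- Delay steps restrict along `projConfig`. -/
lemma delay_proj {d : NNReal} {c c' : Config A (two 1 (n + 1))} (h : DelayStep d c c') :
    DelayStep d (projConfig c) (projConfig c') := by
  obtain ⟨hst, hcl, hinv⟩ := h
  refine ⟨?_, ?_, ?_⟩
  · funext l i
    exact congrFun (congrFun hst l) _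
  · intro l i x
    exact hcl l _ x
  · intro l i d' hd'
    exact hinv l _ d' hd'

lemma ext_initConfig :
    extConfig A (initConfig A (two 1 n)) 0 = initConfig A (two 1 (n + 1)) := by
  refine Config.ext' ?_ ?_ <;> funext l i <;> by_cases h : (i : ℕ) < two 1 n l <;>
    simp [extConfig, initConfig, h]

/-- Extend a timed computation of the `(1,n)` system to the `(1,n+1)` system by
letting the new instance idle in the initial state. -/
noncomputable def extComp (x : TimedComp A (two 1 n) (initConfig A (two 1 n))) :
    TimedComp A (two 1 (n + 1)) (initConfig A (two 1 (n + 1))) where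
  seq := fun v => (x.seq v).map fun p => (extConfig A p.1 p.2, p.2)
  zero_def := by
    show (x.seq 0).map _ = _
    rw [x.zero_def, Option.map_some, ext_initConfig]
  downward := by
    intro v h
    have := x.downward v (by cases hx : x.seq (v + 1) <;> simp_all)
    cases hx : x.seq v <;> simp_all
  step := by
    intro v c t c' t' h1 h2
    cases hx : x.seq v with
    | none => simp [hx] at h1
    | some p =>
      cases hx' : x.seq (v + 1) with
      | none => simp [hx'] at h2
      | some p' =>
        simp only [hx, hx', Option.map_some, Option.some.injEq, Prod.mk.injEq] at h1 h2
        obtain ⟨hc, ht⟩ := h1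
        obtain ⟨hc', ht'⟩ := h2
        subst hc ht hc' ht'
        rcases x.step v p.1 p.2 p'.1 p'.2 (by simp [hx]) (by simp [hx']) with
          ⟨d, hd, hD, hT⟩ | ⟨hS, hT⟩
        · exact Or.inl ⟨d, hd, by rw [hT]; exact delay_ext hD, hT⟩
        · exact Or.inr ⟨by rw [hT]; exact sync_ext hS, hT⟩

@[simp] lemma extComp_seq (x : TimedComp A (two 1 n) (initConfig A (two 1 n))) (v : ℕ) :
    (extComp x).seq v = (x.seq v).map fun p => (extConfig A p.1 p.2, p.2) := rfl

/-- Times are nondecreasing along a timed computation. -/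
lemma time_mono {k : ℕ} {A' : ConjPNTA k} {m : Fin k → ℕ} {c₀ : Config A' m}
    (x : TimedComp A' m c₀) :
    ∀ w v, v ≤ w → ∀ c t c' t', x.seq v = some (c, t) → x.seq w = some (c', t') → t ≤ t' := by
  intro w
  induction w with
  | zero =>
    intro v hv c t c' t' h1 h2
    interval_cases v
    rw [h1] at h2
    cases h2
    rfl
  | succ u ih =>
    intro v hv c t c' t' h1 h2
    rcases Nat.lt_or_ge v (u + 1) with hlt | hge
    · have hsome : (x.seq u).isSome := x.downward u (by simp [h2])
      obtain ⟨⟨c'', t''⟩, hu⟩ := Option.isSome_iff_exists.mp hsome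
      have h1' := ih v (by omega) c t c'' t'' h1 hu
      rcases x.step u c'' t'' c' t' hu h2 with ⟨d, _, _, hT⟩ | ⟨_, hT⟩
      · subst hT; exact le_trans h1' (le_self_add)
      · subst hT; exact h1'
    · have : v = u + 1 := by omega
      subst this
      rw [h1] at h2; cases h2; rfl

/-- Extend an s-path of the `(1,n)` system to the `(1,n+1)` system. -/
noncomputable def extSPath (ρ : SPath A (two 1 n)) : SPath A (two 1 (n + 1)) where
  len := ρ.len
  toFun := fun s => extConfig A (ρ.toFun s) s

lemma timeAt_ext (x : TimedComp A (two 1 n) (initConfig A (two 1 n))) (v : ℕ) :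
    (extComp x).timeAt v = x.timeAt v := by
  unfold TimedComp.timeAt
  cases hx : x.seq v <;> simp [hx]

/-- The extended computation induces the extended s-path. -/
lemma induces_ext {x : TimedComp A (two 1 n) (initConfig A (two 1 n))} {ρ : SPath A (two 1 n)}
    (hI : Induces x ρ) : Induces (extComp x) (extSPath ρ) := by
  obtain ⟨hstep, hinf, hfin⟩ := hI
  refine ⟨?_, ?_, ?_⟩
  · intro v c t c' t' h1 h2 s hs hs'
    cases hx : x.seq v with
    | none => simp [hx] at h1
    | some p =>
      cases hx' : x.seq (v + 1) with
      | none => simp [hx'] at h2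
      | some p' =>
        simp only [extComp_seq, hx, hx', Option.map_some, Option.some.injEq,
          Prod.mk.injEq] at h1 h2
        obtain ⟨hc, ht⟩ := h1
        obtain ⟨hc', ht'⟩ := h2
        subst hc ht hc' ht'
        obtain ⟨hst, hcl⟩ := hstep v p.1 p.2 p'.1 p'.2 (by simp [hx]) (by simp [hx']) s hs hs'
        constructor
        · funext l i
          by_cases hi : (i : ℕ) < two 1 n l
          · simp only [extSPath, extConfig, dif_pos hi]
            exact congrFun (congrFun hst l) ⟨i, hi⟩
          · simp only [extSPath, extConfig, dif_neg hi]
        · intro l i cx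
          by_cases hi : (i : ℕ) < two 1 n l
          · simp only [extSPath, extConfig, dif_pos hi]
            exact hcl l ⟨i, hi⟩ cx
          · simp only [extSPath, extConfig, dif_neg hi]
            exact (add_tsub_cancel_of_le hs).symm
  · intro hx
    have hx' : x.Infinite := by
      intro v
      have := hx v
      cases h : x.seq v <;> simp_all
    rw [show (extSPath ρ).len = ρ.len from rfl, hinf hx']
    congr 1
    funext v
    rw [timeAt_ext]
  · intro v c t h1 h2
    cases hx : x.seq v with
    | none => simp [hx] at h1
    | some p =>
      simp only [extComp_seq, hx, Option.map_some, Option.some.injEq, Prod.mk.injEq] at h1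
      obtain ⟨hc, ht⟩ := h1
      subst hc ht
      have h2' : x.seq (v + 1) = none := by
        cases hxx : x.seq (v + 1) <;> simp_all
      obtain ⟨hlen, hst, hcl⟩ := hfin v p.1 p.2 hx h2'
      refine ⟨hlen, ?_, ?_⟩
      · funext l i
        by_cases hi : (i : ℕ) < two 1 n l
        · simp only [extSPath, extConfig, dif_pos hi]
          exact congrFun (congrFun hst l) ⟨i, hi⟩
        · simp only [extSPath, extConfig, dif_neg hi]
      · intro l i cx
        by_cases hi : (i : ℕ) < two 1 n l
        · simp only [extSPath, extConfig, dif_pos hi]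
          exact hcl l ⟨i, hi⟩ cx
        · simp only [extSPath, extConfig, dif_neg hi]

/-- Transfer of IMTL satisfaction between s-paths of the two systems that have the
same length and agree on the state of the tracked instance at all times. -/
lemma sat_transfer (hn : 0 < n) (Φ : IMTL (A.State 1)) :
    ∀ (ρ : SPath A (two 1 n)) (ρ' : SPath A (two 1 (n + 1))), ρ'.len = ρ.len →
    (∀ s, (ρ'.toFun s).st 1 ⟨0, Nat.succ_pos n⟩ = (ρ.toFun s).st 1 ⟨0, hn⟩) →
    (satIMTL (valFirst A (two 1 (n + 1)) 1 (Nat.succ_pos n)) Φ ρ' ↔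
      satIMTL (valFirst A (two 1 n) 1 hn) Φ ρ) := by
  induction Φ with
  | tt => intro ρ ρ' _ _; simp [satIMTL]
  | atom a =>
    intro ρ ρ' _ hag
    simp only [satIMTL, valFirst, hag 0]
  | and φ ψ ihφ ihψ =>
    intro ρ ρ' hlen hag
    simp only [satIMTL, ihφ ρ ρ' hlen hag, ihψ ρ ρ' hlen hag]
  | not φ ihφ =>
    intro ρ ρ' hlen hag
    simp only [satIMTL, ihφ ρ ρ' hlen hag]
  | untl op q φ ψ ihφ ihψ =>
    intro ρ ρ' hlen hag
    simp only [satIMTL]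
    have hsuff : ∀ t : NNReal, (ρ'.suffix t).len = (ρ.suffix t).len ∧
        ∀ s, ((ρ'.suffix t).toFun s).st 1 ⟨0, Nat.succ_pos n⟩ =
          ((ρ.suffix t).toFun s).st 1 ⟨0, hn⟩ := by
      intro t
      exact ⟨by simp [SPath.suffix, hlen], fun s => hag (t + s)⟩
    constructor
    · rintro ⟨t', h1, h2, h3, h4⟩
      exact ⟨t', by rwa [← hlen], h2,
        (ihψ (ρ.suffix t') (ρ'.suffix t') (hsuff t').1 (hsuff t').2).mp h3,
        fun t ht => (ihφ (ρ.suffix t) (ρ'.suffix t) (hsuff t).1 (hsuff t).2).mp (h4 t ht)⟩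
    · rintro ⟨t', h1, h2, h3, h4⟩
      exact ⟨t', by rwa [hlen], h2,
        (ihψ (ρ.suffix t') (ρ'.suffix t') (hsuff t').1 (hsuff t').2).mpr h3,
        fun t ht => (ihφ (ρ.suffix t) (ρ'.suffix t) (hsuff t).1 (hsuff t).2).mpr (h4 t ht)⟩

lemma extSPath_agrees (hn : 0 < n) (ρ : SPath A (two 1 n)) (s : NNReal) :
    ((extSPath ρ).toFun s).st 1 ⟨0, Nat.succ_pos n⟩ = (ρ.toFun s).st 1 ⟨0, hn⟩ := by
  have h0 : (0 : ℕ) < two 1 n 1 := hn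
  show (extConfig A (ρ.toFun s) s).st 1 ⟨0, Nat.succ_pos n⟩ = _
  simp only [extConfig]
  rw [dif_pos h0]

/-- Classification of synchronization steps in the `(1,n+1)` system: either an
old instance fires (and the step restricts to the `(1,n)` system), or the new
instance fires (and the old part of the configuration is unchanged). -/
lemma sync_cases {c c' : Config A (two 1 (n + 1))} (h : SyncStep c c') :
    SyncStep (projConfig c) (projConfig c') ∨ projConfig c' = projConfig c := by
  obtain ⟨l, i, tr, htr, hsrc, hg, hγ, htgt, hreset, hoth⟩ := h
  rcases old_or_new l i with hi | ⟨hl, hv⟩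
  · left
    refine ⟨l, ⟨(i : ℕ), hi⟩, tr, htr, hsrc, hg, ?_, htgt, hreset, ?_⟩
    · rintro ⟨h', j⟩ hne
      refine hγ ⟨h', Fin.castLE (two_le_two_succ n h') j⟩ ?_
      intro hc
      apply hne
      rw [sig_eq_iff] at hc ⊢
      exact ⟨hc.1, by simpa using hc.2⟩
    · rintro ⟨h', j⟩ hne
      exact hoth ⟨h', Fin.castLE (two_le_two_succ n h') j⟩ (by
        intro hc
        apply hne
        rw [sig_eq_iff] at hc ⊢
        exact ⟨hc.1, by simpa using hc.2⟩)
  · right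
    have key : ∀ (h' : Fin 2) (j : Fin (two 1 n h')),
        (⟨h', Fin.castLE (two_le_two_succ n h') j⟩ : Σ m, Fin (two 1 (n + 1) m)) ≠ ⟨l, i⟩ := by
      intro h' j hc
      rw [sig_eq_iff] at hc
      obtain ⟨rfl, hval⟩ := hc
      subst hl
      have hjn : (j : ℕ) < n := j.isLt
      simp at hval
      omega
    refine Config.ext' ?_ ?_ <;> funext h' j
    · exact (hoth _ (key h' j)).1
    · exact (hoth _ (key h' j)).2

/-- The maximal continuation from a configuration by synchronization steps only,
chosen via choice. -/
noncomputable def chain (c : Config A (two 1 (n + 1))) : ℕ → Option (Config A (two 1 (n + 1)))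
  | 0 => some c
  | j + 1 => (chain c j).bind fun cc =>
      if h : ∃ c', SyncStep cc c' then some (Classical.choose h) else none

lemma chain_down (c : Config A (two 1 (n + 1))) (j : ℕ) :
    (chain c (j + 1)).isSome → (chain c j).isSome := by
  cases h : chain c j <;> simp [chain, h]

lemma chain_step (c : Config A (two 1 (n + 1))) (j : ℕ) {cc cc'}
    (h1 : chain c j = some cc) (h2 : chain c (j + 1) = some cc') : SyncStep cc cc' := by
  rw [chain, h1, Option.bind_some] at h2
  split at h2
  · rename_i hex
    cases h2
    exact Classical.choose_spec hex
  · cases h2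

lemma chain_nosync (c : Config A (two 1 (n + 1))) (j : ℕ) {cc}
    (h1 : chain c j = some cc) (h2 : chain c (j + 1) = none) : ¬ ∃ c', SyncStep cc c' := by
  intro hex
  rw [chain, h1, Option.bind_some, dif_pos hex] at h2
  cases h2

/-- Along the chain from a deadlocked extended configuration, the old part of the
configuration never changes (only the new instance can move). -/
lemma chain_proj (c : Config A (two 1 n)) (t : NNReal)
    (hdead : ∀ c', ¬ ((∃ d : NNReal, 0 < d ∧ DelayStep d c c') ∨ SyncStep c c')) :
    ∀ j cc, chain (extConfig A c t) j = some cc → projConfig cc = c := by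
  intro j
  induction j with
  | zero =>
    intro cc h
    rw [chain] at h
    cases h
    exact proj_ext c t
  | succ j ih =>
    intro cc' h
    have hsome := chain_down (extConfig A c t) j (by simp [h])
    obtain ⟨cc, hcc⟩ := Option.isSome_iff_exists.mp hsome
    have hs := chain_step (extConfig A c t) j hcc h
    rcases sync_cases hs with hS | hEq
    · rw [ih cc hcc] at hS
      exact absurd (Or.inr hS) (hdead _)
    · rw [hEq, ih cc hcc]

lemma seq_isSome_of_le {k : ℕ} {A' : ConjPNTA k} {m : Fin k → ℕ} {c₀ : Config A' m}
    (x : TimedComp A' m c₀) :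
    ∀ v, (x.seq v).isSome → ∀ w, w ≤ v → (x.seq w).isSome := by
  intro v
  induction v with
  | zero =>
    intro h w hw
    interval_cases w
    exact h
  | succ u ih =>
    intro h w hw
    rcases Nat.lt_or_ge w (u + 1) with h1 | h2
    · exact ih (x.downward u h) w (by omega)
    · have : w = u + 1 := by omega
      subst this
      exact h

/-- The continuation sequence: follow the (extended) computation `x` up to position
`v`, then continue with the synchronization chain from `extConfig c t`. -/
noncomputable def contSeq (x : TimedComp A (two 1 n) (initConfig A (two 1 n)))
    (v : ℕ) (c : Config A (two 1 n)) (t : NNReal) :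
    ℕ → Option (Config A (two 1 (n + 1)) × NNReal) :=
  fun w => if w < v then (extComp x).seq w
    else (chain (extConfig A c t) (w - v)).map fun cc => (cc, t)

/-- The continuation computation. -/
noncomputable def contComp (x : TimedComp A (two 1 n) (initConfig A (two 1 n)))
    (v : ℕ) (c : Config A (two 1 n)) (t : NNReal) (hv : x.seq v = some (c, t)) :
    TimedComp A (two 1 (n + 1)) (initConfig A (two 1 (n + 1))) where
  seq := contSeq x v c t
  zero_def := by
    unfold contSeq
    split
    · exact (extComp x).zero_def
    · rename_i h
      have hv0 : v = 0 := by omega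
      subst hv0
      rw [x.zero_def] at hv
      simp only [Option.some.injEq, Prod.mk.injEq] at hv
      obtain ⟨h1, h2⟩ := hv
      subst h1 h2
      rw [Nat.sub_self]
      simp [chain, ext_initConfig]
  downward := by
    intro w hw
    unfold contSeq at hw ⊢
    by_cases h1 : w + 1 < v
    · rw [if_pos h1] at hw
      rw [if_pos (by omega)]
      exact (extComp x).downward w hw
    · rw [if_neg h1] at hw
      by_cases h2 : w < v
      · rw [if_pos h2]
        have : (x.seq w).isSome := seq_isSome_of_le x v (by simp [hv]) w (by omega)
        simpa using this
      · rw [if_neg h2]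
        rw [show w + 1 - v = (w - v) + 1 from by omega] at hw
        have := chain_down (extConfig A c t) (w - v) (by simpa using hw)
        simpa using this
  step := by
    intro w c1 t1 c2 t2 h1 h2
    unfold contSeq at h1 h2
    by_cases hb : w + 1 ≤ v
    · have e1 : (extComp x).seq w = some (c1, t1) := by
        rw [if_pos (by omega)] at h1
        exact h1
      have e2 : (extComp x).seq (w + 1) = some (c2, t2) := by
        by_cases hc : w + 1 < v
        · rw [if_pos hc] at h2
          exact h2
        · have hveq : v = w + 1 := by omega
          rw [if_neg hc, show w + 1 - v = 0 from by omega] at h2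
          simp only [chain, Option.map_some, Option.some.injEq, Prod.mk.injEq] at h2
          obtain ⟨hh1, hh2⟩ := h2
          subst hh1 hh2
          rw [extComp_seq, ← hveq, hv]
          rfl
      exact (extComp x).step w c1 t1 c2 t2 e1 e2
    · rw [if_neg (by omega)] at h1
      rw [if_neg (by omega), show w + 1 - v = (w - v) + 1 from by omega] at h2
      rw [Option.map_eq_some_iff] at h1 h2
      obtain ⟨cc, hcc, hval⟩ := h1
      obtain ⟨cc', hcc', hval'⟩ := h2
      obtain ⟨rfl, rfl⟩ := Prod.mk_inj.mp hval
      obtain ⟨rfl, rfl⟩ := Prod.mk_inj.mp hval'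
      exact Or.inr ⟨chain_step _ _ hcc hcc', rfl⟩

lemma contComp_seq (x : TimedComp A (two 1 n) (initConfig A (two 1 n)))
    (v : ℕ) (c : Config A (two 1 n)) (t : NNReal) (hv : x.seq v = some (c, t)) (w : ℕ) :
    (contComp x v c t hv).seq w = contSeq x v c t w := rfl

/-- Transfer for `E_inf`. -/
lemma einf_transfer (hn : 0 < n) (Φ : IMTL (A.State 1)) (ρ : SPath A (two 1 n))
    (h : ρ.IsInfiniteFrom (initConfig A (two 1 n)))
    (hsat : satIMTL (valFirst A (two 1 n) 1 hn) Φ ρ) :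
    ∃ ρ' : SPath A (two 1 (n + 1)), ρ'.IsInfiniteFrom (initConfig A (two 1 (n + 1))) ∧
      satIMTL (valFirst A (two 1 (n + 1)) 1 (Nat.succ_pos n)) Φ ρ' := by
  obtain ⟨x, hI, hinf⟩ := h
  exact ⟨extSPath ρ, ⟨extComp x, induces_ext hI, fun w => by
      rw [extComp_seq]
      simpa using hinf w⟩,
    (sat_transfer hn Φ ρ _ rfl (extSPath_agrees hn ρ)).mpr hsat⟩

/-- Transfer for `E_fin`. -/
lemma efin_transfer (hn : 0 < n) (Φ : IMTL (A.State 1)) (ρ : SPath A (two 1 n))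
    (h : ρ.IsFiniteFrom (initConfig A (two 1 n)))
    (hsat : satIMTL (valFirst A (two 1 n) 1 hn) Φ ρ) :
    ∃ ρ' : SPath A (two 1 (n + 1)), ρ'.IsFiniteFrom (initConfig A (two 1 (n + 1))) ∧
      satIMTL (valFirst A (two 1 (n + 1)) 1 (Nat.succ_pos n)) Φ ρ' := by
  obtain ⟨x, hI, v, hfin⟩ := h
  exact ⟨extSPath ρ, ⟨extComp x, induces_ext hI, v, by rw [extComp_seq, hfin]; rfl⟩,
    (sat_transfer hn Φ ρ _ rfl (extSPath_agrees hn ρ)).mpr hsat⟩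

/-- Transfer for the deadlocked disjunct of `E`. -/
lemma edead_transfer (hn : 0 < n) (Φ : IMTL (A.State 1)) (ρ : SPath A (two 1 n))
    (hdlk : ρ.IsDeadlockedFrom (initConfig A (two 1 n)))
    (hsat : satIMTL (valFirst A (two 1 n) 1 hn) Φ ρ) :
    ∃ ρ' : SPath A (two 1 (n + 1)),
      (ρ'.IsInfiniteFrom (initConfig A (two 1 (n + 1))) ∨
        ρ'.IsDeadlockedFrom (initConfig A (two 1 (n + 1)))) ∧
      satIMTL (valFirst A (two 1 (n + 1)) 1 (Nat.succ_pos n)) Φ ρ' := by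
  classical
  obtain ⟨x, hI, v, c, t, hv, hv1, hdead⟩ := hdlk
  have hIE := induces_ext hI
  obtain ⟨hlen, hstfin, hclfin⟩ := hI.2.2 v c t hv hv1
  set E : Config A (two 1 (n + 1)) := extConfig A c t with hE
  set z := contComp x v c t hv with hz
  have zseq : ∀ w, z.seq w = contSeq x v c t w := fun w => rfl
  have zseq_le : ∀ w, w ≤ v → z.seq w = (extComp x).seq w := by
    intro w hw
    rw [zseq]
    unfold contSeq
    by_cases h : w < v
    · rw [if_pos h]
    · have hweq : w = v := by omega
      subst hweq
      rw [if_neg h, Nat.sub_self]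
      simp [chain, extComp_seq, hv, hE]
  have zv : z.seq v = some (E, t) := by
    rw [zseq_le v le_rfl, extComp_seq, hv]
    rfl
  have hxle : ∀ w, w ≤ v → (x.seq w).isSome :=
    fun w hw => seq_isSome_of_le x v (by simp [hv]) w hw
  -- the time of any x-entry before v is at most t
  have htle : ∀ w, w ≤ v → ∀ p, x.seq w = some p → p.2 ≤ t := by
    intro w hw p hp
    exact time_mono x v w hw p.1 p.2 c t hp hv
  by_cases hcase : ∀ j, (chain E j).isSome
  · -- the new instance can fire forever: infinite continuation
    have hzinf : z.Infinite := by
      intro w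
      rw [zseq]
      unfold contSeq
      split
      · rename_i h
        have : (x.seq w).isSome := hxle w (by omega)
        simpa using this
      · simpa using hcase (w - v)
    have hInd : Induces z (extSPath ρ) := by
      refine ⟨?_, ?_, ?_⟩
      · intro w c1 t1 c2 t2 h1 h2 s hs hs'
        by_cases hb : w + 1 ≤ v
        · exact hIE.1 w c1 t1 c2 t2 (by rw [← zseq_le w (by omega)]; exact h1)
            (by rw [← zseq_le (w + 1) hb]; exact h2) s hs hs'
        · exfalso
          rw [zseq, contSeq, if_neg (by omega)] at h1 h2
          rw [Option.map_eq_some_iff] at h1 h2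
          obtain ⟨cc, _, hval⟩ := h1
          obtain ⟨cc', _, hval'⟩ := h2
          obtain ⟨-, rfl⟩ := Prod.mk_inj.mp hval
          obtain ⟨-, rfl⟩ := Prod.mk_inj.mp hval'
          exact absurd (lt_of_le_of_lt hs hs') (lt_irrefl _)
      · intro _
        rw [show (extSPath ρ).len = ρ.len from rfl, hlen]
        refine le_antisymm ?_ ?_
        · have htv : z.timeAt v = t := by
            rw [TimedComp.timeAt, zv]
            rfl
          calc ((t : NNReal) : ℝ≥0∞) = (z.timeAt v : ℝ≥0∞) := by rw [htv]
            _ ≤ ⨆ w, (z.timeAt w : ℝ≥0∞) := le_iSup (fun w => ((z.timeAt w : ℝ≥0∞))) v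
        · refine iSup_le fun w => ?_
          rw [ENNReal.coe_le_coe, TimedComp.timeAt]
          rcases le_or_gt w v with hw | hw
          · rw [zseq_le w hw, extComp_seq]
            cases hxw : x.seq w with
            | none =>
              simp only [hxw, Option.map_none, Option.getD_none]
              exact zero_le (a := t)
            | some p =>
              have := htle w hw p hxw
              simp only [Option.map_some, Option.getD_some]
              exact this
          · rw [zseq, contSeq, if_neg (by omega)]
            cases hch : chain E (w - v) with
            | none =>
              simp only [hch, Option.map_none, Option.getD_none]
              exact zero_le (a := t)
            | some cc =>
              simp only [hch, Option.map_some, Option.getD_some]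
              exact le_rfl
      · intro w c1 t1 h1 h2
        exact absurd (hzinf (w + 1)) (by simp [h2])
    exact ⟨extSPath ρ, Or.inl ⟨z, hInd, hzinf⟩,
      (sat_transfer hn Φ ρ _ rfl (extSPath_agrees hn ρ)).mpr hsat⟩
  · -- the chain ends in a deadlock
    push_neg at hcase
    obtain ⟨j₁, hj₁⟩ := hcase
    have hex : ∃ j, chain E j = none := ⟨j₁, by cases h : chain E j₁ <;> simp_all⟩
    set j₀ := Nat.find hex with hj₀
    have hnone : chain E j₀ = none := Nat.find_spec hex
    have hmin : ∀ j, j < j₀ → (chain E j).isSome := by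
      intro j hj
      cases h : chain E j with
      | none => exact absurd h (Nat.find_min hex hj)
      | some => simp
    have h0 : 0 < j₀ := by
      rcases Nat.eq_zero_or_pos j₀ with h | h
      · rw [h] at hnone
        simp [chain] at hnone
      · exact h
    obtain ⟨cf, hcf⟩ := Option.isSome_iff_exists.mp (hmin (j₀ - 1) (by omega))
    have hproj : projConfig cf = c := chain_proj c t hdead (j₀ - 1) cf hcf
    have hnos : ¬ ∃ c', SyncStep cf c' :=
      chain_nosync E (j₀ - 1) hcf (by rw [show j₀ - 1 + 1 = j₀ from by omega]; exact hnone)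
    have hnone_ge : ∀ j, j₀ ≤ j → chain E j = none := by
      intro j
      induction j with
      | zero => intro hj; omega
      | succ u ih =>
        intro hj
        rcases Nat.lt_or_ge j₀ (u + 1) with hlt | hge
        · rw [chain, ih (by omega)]
          rfl
        · rw [show u + 1 = j₀ from by omega]
          exact hnone
    refine ⟨⟨ρ.len, fun s => if s = t then cf else extConfig A (ρ.toFun s) s⟩, Or.inr ⟨z, ?_, ?_⟩, ?_⟩
    · -- Induces
      refine ⟨?_, ?_, ?_⟩
      · intro w c1 t1 c2 t2 h1 h2 s hs hs'
        by_cases hb : w + 1 ≤ v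
        · have hsne : s ≠ t := by
            have h2x : (extComp x).seq (w + 1) = some (c2, t2) := by
              rw [← zseq_le _ hb]
              exact h2
            rw [extComp_seq] at h2x
            rw [Option.map_eq_some_iff] at h2x
            obtain ⟨p, hp, hval⟩ := h2x
            obtain ⟨-, ht2⟩ := Prod.mk_inj.mp hval
            have := htle (w + 1) hb p hp
            exact ne_of_lt (lt_of_lt_of_le hs' (ht2 ▸ this))
          have res := hIE.1 w c1 t1 c2 t2 (by rw [← zseq_le w (by omega)]; exact h1)
            (by rw [← zseq_le (w + 1) hb]; exact h2) s hs hs'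
          simp only [extSPath] at res
          simpa [if_neg hsne] using res
        · exfalso
          rw [zseq, contSeq, if_neg (by omega)] at h1 h2
          rw [Option.map_eq_some_iff] at h1 h2
          obtain ⟨cc, _, hval⟩ := h1
          obtain ⟨cc', _, hval'⟩ := h2
          obtain ⟨-, rfl⟩ := Prod.mk_inj.mp hval
          obtain ⟨-, rfl⟩ := Prod.mk_inj.mp hval'
          exact absurd (lt_of_le_of_lt hs hs') (lt_irrefl _)
      · intro hzinf
        exfalso
        have := hzinf (v + j₀)
        rw [zseq, contSeq, if_neg (by omega), show v + j₀ - v = j₀ from by omega, hnone] at this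
        simp at this
      · intro w c1 t1 h1 h2
        have hw1 : ¬ (w + 1 ≤ v) := by
          intro hle
          rw [zseq_le _ hle, extComp_seq] at h2
          have := hxle (w + 1) hle
          cases hxx : x.seq (w + 1) <;> simp_all
        rw [zseq, contSeq, if_neg (by omega)] at h1
        rw [zseq, contSeq, if_neg (by omega), show w + 1 - v = (w - v) + 1 from by omega] at h2
        rw [Option.map_eq_some_iff] at h1
        obtain ⟨cc, hcc, hval⟩ := h1
        obtain ⟨rfl, rfl⟩ := Prod.mk_inj.mp hval
        have h2' : chain E (w - v + 1) = none := by
          cases hc2 : chain E (w - v + 1) <;> simp_all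
        have hlt : w - v < j₀ := by
          by_contra hge
          rw [hnone_ge (w - v) (by omega)] at hcc
          cases hcc
        have hge : j₀ ≤ w - v + 1 := by
          by_contra hlt'
          have := hmin (w - v + 1) (by omega)
          rw [h2'] at this
          simp at this
        have hwj : w - v = j₀ - 1 := by omega
        rw [hwj, hcf] at hcc
        injection hcc with hcceq
        subst hcceq
        refine ⟨hlen, ?_, ?_⟩
        · show (if t = t then cf else extConfig A (ρ.toFun t) t).st = cf.st
          rw [if_pos rfl]
        · intro l i cx
          show (if t = t then cf else extConfig A (ρ.toFun t) t).cl l i cx = cf.cl l i cx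
          rw [if_pos rfl]
    · -- Deadlocked
      refine ⟨v + (j₀ - 1), cf, t, ?_, ?_, ?_⟩
      · rw [zseq, contSeq, if_neg (by omega), show v + (j₀ - 1) - v = j₀ - 1 from by omega, hcf]
        rfl
      · rw [zseq, contSeq, if_neg (by omega), show v + (j₀ - 1) + 1 - v = j₀ from by omega, hnone]
        rfl
      · intro c' hc
        rcases hc with ⟨d, hd, hD⟩ | hS
        · have := delay_proj hD
          rw [hproj] at this
          exact hdead _ (Or.inl ⟨d, hd, this⟩)
        · exact hnos ⟨c', hS⟩
    · -- satisfaction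
      refine (sat_transfer hn Φ ρ
        ⟨ρ.len, fun s => if s = t then cf else extConfig A (ρ.toFun s) s⟩ rfl ?_).mpr hsat
      intro s
      by_cases hst : s = t
      · subst hst
        show (if s = s then cf else _).st 1 ⟨0, Nat.succ_pos n⟩ = (ρ.toFun s).st 1 ⟨0, hn⟩
        rw [if_pos rfl]
        have h1 : (projConfig cf).st 1 ⟨0, hn⟩ = c.st 1 ⟨0, hn⟩ :=
          congrFun (congrFun (congrArg Config.st hproj) 1) ⟨0, hn⟩
        have h2 : (ρ.toFun s).st 1 ⟨0, hn⟩ = c.st 1 ⟨0, hn⟩ :=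
          congrFun (congrFun hstfin 1) ⟨0, hn⟩
        rw [h2]
        exact h1
      · show (if s = t then cf else extConfig A (ρ.toFun s) s).st 1 ⟨0, Nat.succ_pos n⟩ =
          (ρ.toFun s).st 1 ⟨0, hn⟩
        rw [if_neg hst]
        have h0 : (0 : ℕ) < two 1 n 1 := hn
        simp only [extConfig]
        rw [dif_pos h0]

end Aux

-- STATEMENT 3
theorem conjunctive_monotonicity_i (A : ConjPNTA 2) (Φ : IMTL (A.State 1))
    (Q : PathQ) (hQ : Q = PathQ.E ∨ Q = PathQ.Einf ∨ Q = PathQ.Efin)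
    (n : ℕ) (hn : 1 ≤ n) :
    SatQ A (two 1 n) (valFirst A (two 1 n) 1 hn) Q Φ →
      SatQ A (two 1 (n + 1)) (valFirst A (two 1 (n + 1)) 1 (Nat.succ_pos n)) Q Φ := by
  intro hsat
  rcases hQ with rfl | rfl | rfl
  · obtain ⟨ρ, hρ, hs⟩ := hsat
    rcases hρ with hinf | hdead
    · obtain ⟨ρ', h1, h2⟩ := einf_transfer hn Φ ρ hinf hs
      exact ⟨ρ', Or.inl h1, h2⟩
    · exact edead_transfer hn Φ ρ hdead hs
  · obtain ⟨ρ, hρ, hs⟩ := hsat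
    exact einf_transfer hn Φ ρ hρ hs
  · obtain ⟨ρ, hρ, hs⟩ := hsat
    exact efin_transfer hn Φ ρ hρ hs

end PNTA
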